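/- arXiv:2102.11549 — 3 statements merged into one kernel-verified Lean document; each statement's English description precedes it below -/
import Mathlib

section
/- Let d ≥ 5, m ≥ 1, and ℓ_1 ≥ 1 be integers such that ℓ_1·(m+1) < C(m+d, d). Then C(m+d-1, d-1) - C(m+2, 2) - ℓ_1 + 1 > 0. -/
/-!
Write `A = C(m+n, n)` with `n = d - 1`. Since `C(m+n+1, n+1) = (m+n+1)/(n+1) · A`, the hypothesis
says `ℓ₁ < (m+n+1) A / ((n+1)(m+1))`, and it suffices to show this bound is at most
`A + 1 - C(m+2, 2)`. That reduces to `(n+1)(m+1)(C(m+2,2) - 1) ≤ m n A`, where both sides vanish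
for `m = 0`; for `m ≥ 1` it follows from `A ≥ C(m+4, 4)` and `12 (n+1) ≤ n (m+2)(m+4)`, both
because `n ≥ 4`.
-/

namespace Nat

lemma two_mul_choose_add_two_two (m : ℕ) : 2 * (m + 2).choose 2 = (m + 1) * (m + 2) := by
  have := (m + 2).descFactorial_eq_factorial_mul_choose 2
  simp [descFactorial] at this
  linarith

lemma twentyFour_mul_choose_add_four_four (m : ℕ) :
    24 * (m + 4).choose 4 = (m + 1) * (m + 2) * (m + 3) * (m + 4) := by
  have := (m + 4).descFactorial_eq_factorial_mul_choose 4
  simp [descFactorial, factorial] at this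
  linarith

lemma choose_add_four_four_le {m n : ℕ} (hn : 4 ≤ n) : (m + 4).choose 4 ≤ (m + n).choose n := by
  rw [← choose_symm_add, ← choose_symm_add]
  exact choose_le_choose m (by omega)

lemma succ_mul_succ_mul_choose_two_le {m n : ℕ} (hn : 4 ≤ n) :
    (n + 1) * (m + 1) * (m + 2).choose 2 ≤ m * n * (m + n).choose n + (n + 1) * (m + 1) := by
  rcases Nat.eq_zero_or_pos m with rfl | hm
  · simp
  have hpoly : 12 * (n + 1) ≤ n * ((m + 2) * (m + 4)) :=
    calc 12 * (n + 1) ≤ n * (3 * 5) := by omega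
      _ ≤ n * ((m + 2) * (m + 4)) := by gcongr <;> omega
  suffices 24 * ((n + 1) * (m + 1) * (m + 2).choose 2) ≤
      24 * (m * n * (m + n).choose n + (n + 1) * (m + 1)) by omega
  calc 24 * ((n + 1) * (m + 1) * (m + 2).choose 2)
      = 12 * (n + 1) * (m + 1) * (2 * (m + 2).choose 2) := by ring
    _ = (m + 1) * m * (m + 3) * (12 * (n + 1)) + 24 * ((n + 1) * (m + 1)) := by
      rw [two_mul_choose_add_two_two]; ring
    _ ≤ (m + 1) * m * (m + 3) * (n * ((m + 2) * (m + 4))) + 24 * ((n + 1) * (m + 1)) := by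
      gcongr
    _ = m * n * (24 * (m + 4).choose 4) + 24 * ((n + 1) * (m + 1)) := by
      rw [twentyFour_mul_choose_add_four_four]; ring
    _ ≤ m * n * (24 * (m + n).choose n) + 24 * ((n + 1) * (m + 1)) := by
      gcongr; exact choose_add_four_four_le hn
    _ = 24 * (m * n * (m + n).choose n + (n + 1) * (m + 1)) := by ring

lemma choose_succ_le_succ_mul_sub_choose_two {m n : ℕ} (hn : 4 ≤ n) :
    ((m + n + 1).choose (n + 1) : ℤ) ≤ (m + 1) * ((m + n).choose n + 1 - (m + 2).choose 2) := by
  have hN := add_one_mul_choose_eq (m + n) n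
  have hB := succ_mul_succ_mul_choose_two_le (m := m) hn
  zify at hN hB
  refine le_of_mul_le_mul_left ?_ (show (0 : ℤ) < n + 1 by positivity)
  linear_combination hB - hN

end Nat

theorem stmt7_general (d m ℓ₁ : ℕ) (hd : 5 ≤ d)
    (h : ℓ₁ * (m + 1) < (m + d).choose d) :
    0 < ((m + d - 1).choose (d - 1) : ℤ) - ((m + 2).choose 2 : ℤ) - (ℓ₁ : ℤ) + 1 := by
  obtain ⟨n, rfl⟩ : ∃ n, d = n + 1 := ⟨d - 1, by omega⟩
  rw [← add_assoc] at h
  have hℓ : (m + 1 : ℤ) * ℓ₁ < (m + 1) * ((m + n).choose n + 1 - (m + 2).choose 2) := by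
    rw [mul_comm]
    exact (Int.ofNat_lt.mpr h).trans_le
      (by exact_mod_cast Nat.choose_succ_le_succ_mul_sub_choose_two (by omega))
  have := lt_of_mul_lt_mul_left hℓ (by positivity)
  simp only [Nat.add_sub_cancel, ← add_assoc]
  linarith

theorem stmt7 (d m ℓ₁ : ℕ) (hd : 5 ≤ d) (hm : 1 ≤ m) (hℓ : 1 ≤ ℓ₁)
    (h : ℓ₁ * (m + 1) < (m + d).choose d) :
    0 < ((m + d - 1).choose (d - 1) : ℤ) - ((m + 2).choose 2 : ℤ) - (ℓ₁ : ℤ) + 1 :=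
  stmt7_general d m ℓ₁ hd h
end

section
/- For integers d ≥ 3, define A_{ℓ_1,ℓ_2} := coeff_d( ((1-t)^{ℓ_1}(1-t^2)^{ℓ_2}/(1-t)^{n+1}) · (1 - ℓ_1·t^{d-1} - ℓ_2·t^{d-2}) ). Then for ℓ_1, ℓ_2 ≥ 0 with ℓ_1 + ℓ_2 < n and m := n - ℓ_1, one has A_{ℓ_1,ℓ_2} = coeff_d( (1/(1-t))^{m+1-ℓ_2} · (1+t)^{ℓ_2} ) - ℓ_2·C(m+2, 2) - ℓ_1·(m+1) + ℓ_2². -/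
/-!
With `m = n - ℓ₁`, the series multiplying `1 - ℓ₁ t^{d-1} - ℓ₂ t^{d-2}` is
`(1 - t)^{-(m+1)} (1 - t²)^{ℓ₂} = (1 - t)^{-(m+1-ℓ₂)} (1 + t)^{ℓ₂}`.
As `d ≥ 2`, the two correction terms only see its coefficients of `t` and `t²`; modulo `t³` the
series is `(1 - t)^{-(m+1)} (1 - ℓ₂ t²)`, whose coefficients there are `m + 1` and
`C(m+2, 2) - ℓ₂`.
-/

open PowerSeries Finset

/-- `A_{ℓ₁,ℓ₂}` from the paper, for fixed `d` and `n`. -/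
noncomputable def A (d n ℓ₁ ℓ₂ : ℕ) : ℚ :=
  PowerSeries.coeff d
    ((1 - (PowerSeries.X : PowerSeries ℚ)) ^ ℓ₁ *
      (1 - (PowerSeries.X : PowerSeries ℚ) ^ 2) ^ ℓ₂ *
      ((1 - (PowerSeries.X : PowerSeries ℚ))⁻¹) ^ (n + 1) *
      (1 - (ℓ₁ : PowerSeries ℚ) * PowerSeries.X ^ (d - 1) -
        (ℓ₂ : PowerSeries ℚ) * PowerSeries.X ^ (d - 2)))

namespace PowerSeries

section CommRing

variable {R : Type*} [CommRing R]

theorem coeff_natCast_mul_X_pow_sub_mul {d j : ℕ} (a : ℕ) (f : R⟦X⟧) (h : j ≤ d) :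
    coeff d ((a : R⟦X⟧) * X ^ (d - j) * f) = a * coeff j f := by
  rw [← map_natCast C, mul_assoc, coeff_C_mul, coeff_X_pow_mul', if_pos (Nat.sub_le d j),
    Nat.sub_sub_self h]

theorem coeff_mul_one_sub_mul_X_pow_pred_sub_mul_X_pow_sub_two {d : ℕ} (f : R⟦X⟧) (a b : ℕ)
    (hd : 2 ≤ d) :
    coeff d (f * (1 - (a : R⟦X⟧) * X ^ (d - 1) - (b : R⟦X⟧) * X ^ (d - 2))) =
      coeff d f - a * coeff 1 f - b * coeff 2 f := by
  rw [mul_sub, mul_sub, mul_one, map_sub, map_sub, mul_comm f, mul_comm f,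
    coeff_natCast_mul_X_pow_sub_mul _ _ (by omega), coeff_natCast_mul_X_pow_sub_mul _ _ hd]

theorem coeff_eq_of_X_pow_dvd_sub {n j : ℕ} {f g : R⟦X⟧} (h : X ^ n ∣ f - g) (hj : j < n) :
    coeff j f = coeff j g :=
  sub_eq_zero.mp (by rw [← map_sub]; exact X_pow_dvd_iff.mp h j hj)

theorem X_pow_three_dvd_one_sub_X_sq_pow_sub (b : ℕ) :
    (X : R⟦X⟧) ^ 3 ∣ (1 - X ^ 2) ^ b - (1 - (b : R⟦X⟧) * X ^ 2) := by
  induction b with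
  | zero => simp
  | succ b ih =>
    have key : (1 - X ^ 2 : R⟦X⟧) ^ (b + 1) - (1 - ((b + 1 : ℕ) : R⟦X⟧) * X ^ 2) =
        ((1 - X ^ 2) ^ b - (1 - (b : R⟦X⟧) * X ^ 2)) * (1 - X ^ 2) +
          X ^ 3 * ((b : R⟦X⟧) * X) := by
      push_cast; ring
    rw [key]
    exact dvd_add (ih.mul_right _) (dvd_mul_right _ _)

theorem coeff_mul_one_sub_X_sq_pow_of_lt_three {j : ℕ} (f : R⟦X⟧) (b : ℕ) (hj : j < 3) :
    coeff j (f * (1 - X ^ 2) ^ b) = coeff j f - b * (if 2 ≤ j then coeff (j - 2) f else 0) := by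
  rw [coeff_eq_of_X_pow_dvd_sub (g := f * (1 - (b : R⟦X⟧) * X ^ 2))
    (by rw [← mul_sub]; exact (X_pow_three_dvd_one_sub_X_sq_pow_sub b).mul_left f) hj,
    mul_sub, mul_one, map_sub, mul_left_comm, ← map_natCast C, coeff_C_mul, coeff_mul_X_pow']

end CommRing

section Field

variable {K : Type*} [Field K]

theorem coeff_inv_one_sub_X_pow_succ (k j : ℕ) :
    coeff j ((1 - X : K⟦X⟧)⁻¹ ^ (k + 1)) = (k + j).choose j := by
  rw [(inv_eq_iff_mul_eq_one (by simp)).mpr (mk_one_mul_one_sub_eq_one K),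
    mk_one_pow_eq_mk_choose_add, coeff_mk, Nat.choose_symm_add]

theorem one_sub_X_pow_mul_inv_one_sub_X_pow_add (a c : ℕ) :
    (1 - X : K⟦X⟧) ^ a * (1 - X)⁻¹ ^ (a + c) = (1 - X)⁻¹ ^ c := by
  rw [pow_add, ← mul_assoc, ← mul_pow, PowerSeries.mul_inv_cancel _ (by simp), one_pow, one_mul]

end Field

end PowerSeries

theorem stmt8_general (d n ℓ₁ ℓ₂ : ℕ) (hd : 3 ≤ d) (h : ℓ₁ + ℓ₂ < n) :
    A d n ℓ₁ ℓ₂ =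
      PowerSeries.coeff d
          (((1 - (PowerSeries.X : PowerSeries ℚ))⁻¹) ^ (n - ℓ₁ + 1 - ℓ₂) *
            (1 + (PowerSeries.X : PowerSeries ℚ)) ^ ℓ₂) -
        (ℓ₂ : ℚ) * ((n - ℓ₁ + 2).choose 2 : ℚ) - (ℓ₁ : ℚ) * ((n - ℓ₁ : ℕ) + 1 : ℚ) +
        (ℓ₂ : ℚ) ^ 2 := by
  set F : ℚ⟦X⟧ := (1 - X)⁻¹ ^ (n - ℓ₁ + 1) * (1 - X ^ 2) ^ ℓ₂ with hF_def
  have hA : (1 - X) ^ ℓ₁ * (1 - X ^ 2) ^ ℓ₂ * (1 - X)⁻¹ ^ (n + 1) = F := by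
    rw [hF_def, show n + 1 = ℓ₁ + (n - ℓ₁ + 1) by omega, mul_right_comm,
      one_sub_X_pow_mul_inv_one_sub_X_pow_add, mul_comm]
  have hF_rhs : F = (1 - X)⁻¹ ^ (n - ℓ₁ + 1 - ℓ₂) * (1 + X) ^ ℓ₂ := by
    obtain ⟨k, hk⟩ : ∃ k, n - ℓ₁ + 1 = ℓ₂ + k := ⟨n - ℓ₁ + 1 - ℓ₂, by omega⟩
    rw [hF_def, hk, Nat.add_sub_cancel_left,
      show (1 - X ^ 2 : ℚ⟦X⟧) = (1 - X) * (1 + X) by ring, mul_pow,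
      ← mul_assoc, mul_comm _ ((1 - X) ^ ℓ₂), one_sub_X_pow_mul_inv_one_sub_X_pow_add]
  have h1 : coeff 1 F = ((n - ℓ₁ : ℕ) : ℚ) + 1 := by
    simp [F, coeff_mul_one_sub_X_sq_pow_of_lt_three, coeff_inv_one_sub_X_pow_succ]
  have h2 : coeff 2 F = (n - ℓ₁ + 2).choose 2 - ℓ₂ := by
    simp [F, coeff_mul_one_sub_X_sq_pow_of_lt_three, coeff_inv_one_sub_X_pow_succ]
  rw [A, hA, coeff_mul_one_sub_mul_X_pow_pred_sub_mul_X_pow_sub_two _ _ _ (by omega), h1, h2,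
    hF_rhs]
  ring

theorem stmt8 (d n ℓ₁ ℓ₂ : ℕ) (hd : 3 ≤ d) (hn : 1 ≤ n) (h : ℓ₁ + ℓ₂ < n) :
    A d n ℓ₁ ℓ₂ =
      PowerSeries.coeff d
          (((1 - (PowerSeries.X : PowerSeries ℚ))⁻¹) ^ (n - ℓ₁ + 1 - ℓ₂) *
            (1 + (PowerSeries.X : PowerSeries ℚ)) ^ ℓ₂) -
        (ℓ₂ : ℚ) * ((n - ℓ₁ + 2).choose 2 : ℚ) - (ℓ₁ : ℚ) * ((n - ℓ₁ : ℕ) + 1 : ℚ) +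
        (ℓ₂ : ℚ) ^ 2 :=
  stmt8_general d n ℓ₁ ℓ₂ hd h
end

section
/- Let n ≥ 2, r < n, and a_1, …, a_r ≥ 1 be integers with a_i ≤ d/2 for all i, where d ≥ 4. Let ℓ := #{i : a_i = d/2} (so ℓ = 0 if d is odd). Then, writing N+1 := C(n+d, d) - coeff_d( ∏_{i=1}^r (1-t^{a_i}) / (1-t)^{n+1} ) and M := ∑_{j=1}^r coeff_{a_j}( ∏_{i=1}^r (1-t^{a_i}) / (1-t)^{n+1} ), one has the identity M + N + 1 - 1 = C(n+d,d) - coeff_d( ∏_{i=1}^r (1-t^{a_i})(1-t^{d-a_i}) / (1-t)^{n+1} ) + C(ℓ, 2) - 1; equivalently, coeff_d( ∏_{i=1}^r (1-t^{a_i})(1-t^{d-a_i}) / (1-t)^{n+1} ) = coeff_d( ∏_{i=1}^r (1-t^{a_i}) / (1-t)^{n+1} ) - ∑_{j=1}^r coeff_{a_j}( ∏_{i=1}^r (1-t^{a_i}) / (1-t)^{n+1} ) + C(ℓ, 2). -/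
/-!
Write `F = ∏ (1 - t^{a_i}) / (1 - t)^{n+1}`, so the left-hand side is the coefficient of `t^d`
in `∏ (1 - t^{d - a_i}) · F`. Every exponent `d - a_i` is at least `d / 2`, so up to degree `d` the
product `∏ (1 - t^{d - a_i})` is `1 - ∑ t^{d - a_i} + C(ℓ, 2) t^d`: three factors already overshoot
degree `d`, and two reach it exactly when both exponents equal `d / 2`. Reading off the coefficient
of `t^d` and using that `F` has constant term `1` gives the identity.
-/

open PowerSeries Finset

namespace PowerSeries

variable {R : Type*} [CommRing R]

theorem coeff_X_pow_add_mul_of_le_two_mul {d p q : ℕ} (hp : d ≤ 2 * p) (hq : d ≤ 2 * q)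
    (F : R⟦X⟧) :
    coeff d (X ^ (p + q) * F) = if 2 * p = d ∧ 2 * q = d then coeff 0 F else 0 := by
  rw [coeff_X_pow_mul']
  split_ifs with h₁ h₂ h₂
  · rw [show d - (p + q) = 0 by omega]
  all_goals first | rfl | omega

theorem coeff_prod_one_sub_X_pow_mul {ι : Type*} [DecidableEq ι] (s : Finset ι) (b : ι → ℕ)
    {d : ℕ} (hb : ∀ i ∈ s, d ≤ 2 * b i) (hb₀ : ∀ i ∈ s, 0 < b i) (F : R⟦X⟧) :
    coeff d ((∏ i ∈ s, (1 - X ^ b i)) * F) =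
      coeff d F - ∑ i ∈ s, coeff d (X ^ b i * F) +
        ((#{i ∈ s | 2 * b i = d}).choose 2 : ℕ) * coeff 0 F := by
  induction s using Finset.induction_on generalizing F with
  | empty => simp
  | insert j s hj ih =>
    rw [prod_insert hj, mul_comm (1 - X ^ b j), mul_assoc,
      ih (fun i hi => hb i (mem_insert_of_mem hi)) (fun i hi => hb₀ i (mem_insert_of_mem hi))]
    have hpair : ∑ i ∈ s, coeff d (X ^ (b i + b j) * F) =
        (if 2 * b j = d then (#{i ∈ s | 2 * b i = d} : R) else 0) * coeff 0 F := by
      rw [sum_congr rfl fun i hi =>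
        coeff_X_pow_add_mul_of_le_two_mul (hb i (mem_insert_of_mem hi))
          (hb j (mem_insert_self j s)) F]
      split_ifs with h <;> simp [h, sum_ite, ← nsmul_eq_mul]
    have hconst : coeff 0 (X ^ b j * F) = 0 := by
      simp [coeff_X_pow_mul', (hb₀ j (mem_insert_self j s)).ne']
    simp only [sub_mul, one_mul, map_sub, mul_sub, sum_sub_distrib, ← mul_assoc, ← pow_add,
      hconst, sum_insert hj, filter_insert]
    rw [hpair]
    split_ifs with h
    · rw [card_insert_of_notMem (by simp [hj]), Nat.choose_succ_succ', Nat.choose_one_right]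
      push_cast
      ring
    · ring

end PowerSeries

theorem stmt12_general (d n r : ℕ) (a : Fin r → ℕ)
    (ha1 : ∀ i, 1 ≤ a i) (ha2 : ∀ i, 2 * a i ≤ d) :
    PowerSeries.coeff (R := ℚ) d
        ((∏ i, ((1 - (PowerSeries.X : PowerSeries ℚ) ^ (a i)) *
            (1 - (PowerSeries.X : PowerSeries ℚ) ^ (d - a i)))) *
          ((1 - (PowerSeries.X : PowerSeries ℚ))⁻¹) ^ (n + 1)) =
      PowerSeries.coeff (R := ℚ) d
          ((∏ i, (1 - (PowerSeries.X : PowerSeries ℚ) ^ (a i))) *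
            ((1 - (PowerSeries.X : PowerSeries ℚ))⁻¹) ^ (n + 1)) -
        (∑ j, PowerSeries.coeff (R := ℚ) (a j)
          ((∏ i, (1 - (PowerSeries.X : PowerSeries ℚ) ^ (a i))) *
            ((1 - (PowerSeries.X : PowerSeries ℚ))⁻¹) ^ (n + 1))) +
        (((Finset.univ.filter fun i => 2 * a i = d).card.choose 2 : ℕ) : ℚ) := by
  set F : ℚ⟦X⟧ := (∏ i, (1 - X ^ a i)) * (1 - X)⁻¹ ^ (n + 1)
  have hF₀ : coeff 0 F = 1 := by
    simp [F, coeff_zero_eq_constantCoeff, map_prod, fun i => Nat.one_le_iff_ne_zero.mp (ha1 i)]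
  have hsplit : (∏ i, ((1 - X ^ a i) * (1 - X ^ (d - a i)))) * (1 - X)⁻¹ ^ (n + 1) =
      (∏ i, (1 - X ^ (d - a i))) * F := by
    rw [prod_mul_distrib]
    ring
  have hshift (j : Fin r) : coeff d (X ^ (d - a j) * F) = coeff (a j) F := by
    have := ha2 j
    rw [coeff_X_pow_mul', if_pos (Nat.sub_le d (a j)), Nat.sub_sub_self (by omega)]
  have hhalf : (univ.filter fun i => 2 * (d - a i) = d) = univ.filter fun i => 2 * a i = d :=
    filter_congr fun i _ => by have := ha2 i; omega
  rw [hsplit, coeff_prod_one_sub_X_pow_mul _ _ (fun i _ => by have := ha2 i; omega)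
    (fun i _ => by have := ha1 i; have := ha2 i; omega), hF₀, hhalf]
  simp only [hshift, mul_one]

theorem stmt12 (d n r : ℕ) (a : Fin r → ℕ) (hd : 4 ≤ d) (hn : 2 ≤ n) (hr : r < n)
    (ha1 : ∀ i, 1 ≤ a i) (ha2 : ∀ i, 2 * a i ≤ d) :
    PowerSeries.coeff (R := ℚ) d
        ((∏ i, ((1 - (PowerSeries.X : PowerSeries ℚ) ^ (a i)) *
            (1 - (PowerSeries.X : PowerSeries ℚ) ^ (d - a i)))) *
          ((1 - (PowerSeries.X : PowerSeries ℚ))⁻¹) ^ (n + 1)) =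
      PowerSeries.coeff (R := ℚ) d
          ((∏ i, (1 - (PowerSeries.X : PowerSeries ℚ) ^ (a i))) *
            ((1 - (PowerSeries.X : PowerSeries ℚ))⁻¹) ^ (n + 1)) -
        (∑ j, PowerSeries.coeff (R := ℚ) (a j)
          ((∏ i, (1 - (PowerSeries.X : PowerSeries ℚ) ^ (a i))) *
            ((1 - (PowerSeries.X : PowerSeries ℚ))⁻¹) ^ (n + 1))) +
        (((Finset.univ.filter fun i => 2 * a i = d).card.choose 2 : ℕ) : ℚ) :=
  stmt12_general d n r a ha1 ha2
end
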